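/- arXiv:2103.04700 — 4 statements merged into one kernel-verified Lean document; each statement's English description precedes it below -/
import Mathlib

section
/- Let τ ≥ 0 and B ≥ 0 be real numbers, and let (a_k), (b_k), (c_k), (γ_k) be sequences of nonnegative real numbers (indexed by integers k ≥ 0) such that for every n ≥ 0, a_n + τ·Σ_{k=0}^{n} b_k ≤ τ·Σ_{k=0}^{n} γ_k·a_k + τ·Σ_{k=0}^{n} c_k + B. Suppose in addition that τ·γ_k < 1 for all k, and set σ_k = (1 − τ·γ_k)^{−1}. Then for every n ≥ 0, a_n + τ·Σ_{k=0}^{n} b_k ≤ (τ·Σ_{k=0}^{n} c_k + B)·exp(τ·Σ_{k=0}^{n} γ_k·σ_k). -/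
namespace HeywoodRannacher

open Finset in
/-- Discrete Gronwall inequality (Heywood–Rannacher type). -/
theorem discrete_gronwall
    (τ B : ℝ) (hτ : 0 ≤ τ) (hB : 0 ≤ B)
    (a b c γ : ℕ → ℝ)
    (ha : ∀ k, 0 ≤ a k) (hb : ∀ k, 0 ≤ b k) (hc : ∀ k, 0 ≤ c k) (hγ : ∀ k, 0 ≤ γ k)
    (hrec : ∀ n : ℕ, a n + τ * ∑ k ∈ range (n + 1), b k ≤
      τ * ∑ k ∈ range (n + 1), γ k * a k + τ * ∑ k ∈ range (n + 1), c k + B)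
    (hτγ : ∀ k, τ * γ k < 1)
    (σ : ℕ → ℝ) (hσ : ∀ k, σ k = (1 - τ * γ k)⁻¹) :
    ∀ n : ℕ, a n + τ * ∑ k ∈ range (n + 1), b k ≤
      (τ * ∑ k ∈ range (n + 1), c k + B) *
        Real.exp (τ * ∑ k ∈ range (n + 1), γ k * σ k) := by
  have hone : ∀ k, 0 < 1 - τ * γ k := fun k => by linarith [hτγ k]
  have hσpos : ∀ k, 0 < σ k := fun k => by rw [hσ k]; exact inv_pos.2 (hone k)
  have hσeq : ∀ k, σ k * (1 - τ * γ k) = 1 := fun k => by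
    rw [hσ k, inv_mul_cancel₀ (hone k).ne']
  have hτγ0 : ∀ k, 0 ≤ τ * γ k := fun k => mul_nonneg hτ (hγ k)
  have hg : ∀ k, 0 ≤ τ * γ k * σ k := fun k =>
    mul_nonneg (hτγ0 k) (hσpos k).le
  set C : ℕ → ℝ := fun n => τ * ∑ k ∈ range (n + 1), c k + B with hCdef
  have hC0 : ∀ n, 0 ≤ C n := fun n => by
    have : 0 ≤ ∑ k ∈ range (n + 1), c k := Finset.sum_nonneg fun k _ => hc k
    have := mul_nonneg hτ this
    simp only [hCdef]; linarith
  have hCmono : ∀ n, C n ≤ C (n + 1) := fun n => by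
    simp only [hCdef, Finset.sum_range_succ]
    nlinarith [mul_nonneg hτ (hc (n + 1))]
  have hP1 : ∀ n, (1:ℝ) ≤ ∏ k ∈ range (n + 1), (1 + τ * γ k * σ k) := by
    intro n
    have := Finset.prod_le_prod (f := fun _ : ℕ => (1:ℝ))
      (g := fun k => 1 + τ * γ k * σ k) (s := range (n + 1))
      (fun k _ => zero_le_one)
      (fun k _ => by show (1:ℝ) ≤ 1 + τ * γ k * σ k; linarith [hg k])
    simpa using this
  -- a n ≤ σ n * (T_{n-1} + C n)
  have hbsum : ∀ n, 0 ≤ τ * ∑ k ∈ range (n + 1), b k := fun n =>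
    mul_nonneg hτ (Finset.sum_nonneg fun k _ => hb k)
  have key : ∀ n, τ * ∑ k ∈ range (n + 1), γ k * a k ≤
      C n * (∏ k ∈ range (n + 1), (1 + τ * γ k * σ k) - 1) := by
    intro n
    induction n with
    | zero =>
      have h0 := hrec 0
      simp only [zero_add, Finset.sum_range_one, Finset.prod_range_one] at h0 ⊢
      have hb0 := hbsum 0
      simp only [zero_add, Finset.sum_range_one] at hb0
      -- (1 - τγ0) a0 ≤ C 0, hence a0 ≤ σ0 * C 0
      have h1 : (1 - τ * γ 0) * a 0 ≤ C 0 := by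
        simp only [hCdef, zero_add, Finset.sum_range_one]; nlinarith
      have h2 : a 0 ≤ σ 0 * C 0 := by
        have h3 := mul_le_mul_of_nonneg_left h1 (hσpos 0).le
        have h4 : σ 0 * ((1 - τ * γ 0) * a 0) = a 0 := by
          rw [← mul_assoc, hσeq 0, one_mul]
        linarith
      have h5 := mul_le_mul_of_nonneg_left h2 (hτγ0 0)
      simp only [hCdef, zero_add, Finset.sum_range_one] at h2 h5 ⊢
      nlinarith
    | succ n ih =>
      have hr := hrec (n + 1)
      rw [Finset.sum_range_succ (f := fun k => γ k * a k)] at hr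
      have hbs := hbsum (n + 1)
      set T := τ * ∑ k ∈ range (n + 1), γ k * a k with hT
      set P := ∏ k ∈ range (n + 1), (1 + τ * γ k * σ k) with hP
      have hrr : a (n + 1) ≤ τ * γ (n + 1) * a (n + 1) + T + C (n + 1) := by
        simp only [hCdef] at hr ⊢
        nlinarith
      have h1 : (1 - τ * γ (n + 1)) * a (n + 1) ≤ T + C (n + 1) := by nlinarith
      have h2 : a (n + 1) ≤ σ (n + 1) * (T + C (n + 1)) := by
        have h3 := mul_le_mul_of_nonneg_left h1 (hσpos (n + 1)).le
        have h4 : σ (n + 1) * ((1 - τ * γ (n + 1)) * a (n + 1)) = a (n + 1) := by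
          rw [← mul_assoc, hσeq (n + 1), one_mul]
        linarith
      rw [Finset.sum_range_succ (f := fun k => γ k * a k), mul_add,
        Finset.prod_range_succ, ← hT, ← hP]
      have h3 : τ * γ (n + 1) * a (n + 1) ≤
          τ * γ (n + 1) * σ (n + 1) * (T + C (n + 1)) := by
        have := mul_le_mul_of_nonneg_left h2 (hτγ0 (n + 1))
        nlinarith
      have hTC : T ≤ C n * (P - 1) := ih
      have hCn := hC0 n
      have hCn1 := hC0 (n + 1)
      have hCm := hCmono n
      have hPn := hP1 n
      rw [← hP] at hPn
      have hgn := hg (n + 1)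
      nlinarith [mul_nonneg hgn (sub_nonneg.2 hCm), mul_nonneg hgn (sub_nonneg.2 hPn),
        mul_nonneg (mul_nonneg hgn (sub_nonneg.2 hCm)) (sub_nonneg.2 hPn)]
  intro n
  have hkey := key n
  have hr := hrec n
  have hprod_le : ∏ k ∈ range (n + 1), (1 + τ * γ k * σ k) ≤
      Real.exp (τ * ∑ k ∈ range (n + 1), γ k * σ k) := by
    rw [mul_comm τ, Finset.sum_mul]
    rw [Real.exp_sum]
    apply Finset.prod_le_prod (fun k _ => by linarith [hg k])
    intro k _
    have := Real.add_one_le_exp (γ k * σ k * τ)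
    have : 1 + γ k * σ k * τ ≤ Real.exp (γ k * σ k * τ) := by linarith
    calc 1 + τ * γ k * σ k = 1 + γ k * σ k * τ := by ring
      _ ≤ _ := this
  have hCn := hC0 n
  calc a n + τ * ∑ k ∈ range (n + 1), b k
      ≤ τ * ∑ k ∈ range (n + 1), γ k * a k + C n := by
        simp only [hCdef] at hr ⊢; linarith
    _ ≤ C n * (∏ k ∈ range (n + 1), (1 + τ * γ k * σ k) - 1) + C n := by linarith
    _ = C n * ∏ k ∈ range (n + 1), (1 + τ * γ k * σ k) := by ring
    _ ≤ C n * Real.exp (τ * ∑ k ∈ range (n + 1), γ k * σ k) :=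
        mul_le_mul_of_nonneg_left hprod_le hCn
end HeywoodRannacher
end

section
/- Fix n ≥ 0 and suppose the time-discrete SAV scheme relations hold at step n: U^{n+1} − U^n = (τ/2)·(V^{n+1} + V^n); V^{n+1} − V^n = −(τ/2)·A(U^{n+1} + U^n) − (τλ/2)·(U^{n+1} + U^n) − (τ/2)·(R^{n+1} + R^n)·b^n; and R^{n+1} − R^n = (1/2)·⟨b^n, U^{n+1} − U^n⟩. Then the discrete energy is exactly conserved over this step: (1/2)·(‖V^{n+1}‖² + ⟨A U^{n+1}, U^{n+1}⟩ + λ‖U^{n+1}‖²) + (R^{n+1})² = (1/2)·(‖V^{n}‖² + ⟨A U^{n}, U^{n}⟩ + λ‖U^{n}‖²) + (R^{n})². Consequently, if the relations hold for every n ≥ 0, the discrete energy at step n equals its value at n = 0 for all n. -/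
open scoped RealInnerProductSpace

/-- Energy conservation of the time-discrete Crank–Nicolson SAV scheme:
each step conserves the discrete energy exactly, and consequently if the scheme
relations hold at every step, the discrete energy equals its initial value. -/
theorem sav_time_discrete_energy_conservation
    {H : Type*} [NormedAddCommGroup H] [InnerProductSpace ℝ H] [CompleteSpace H]
    (A : H →L[ℝ] H) (hA : ∀ x y : H, ⟪A x, y⟫ = ⟪x, A y⟫)
    (lam : ℝ) (hlam : 0 ≤ lam) (τ : ℝ) (hτ : 0 < τ)
    (U V b : ℕ → H) (R : ℕ → ℝ) :
    (∀ n : ℕ,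
      U (n + 1) - U n = (τ / 2) • (V (n + 1) + V n) →
      V (n + 1) - V n = -((τ / 2) • A (U (n + 1) + U n)) - (τ * lam / 2) • (U (n + 1) + U n)
        - ((τ / 2) * (R (n + 1) + R n)) • b n →
      R (n + 1) - R n = (1 / 2) * ⟪b n, U (n + 1) - U n⟫ →
      (1 / 2) * (‖V (n + 1)‖ ^ 2 + ⟪A (U (n + 1)), U (n + 1)⟫ + lam * ‖U (n + 1)‖ ^ 2)
          + R (n + 1) ^ 2 =
        (1 / 2) * (‖V n‖ ^ 2 + ⟪A (U n), U n⟫ + lam * ‖U n‖ ^ 2) + R n ^ 2) ∧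
    ((∀ n : ℕ,
        U (n + 1) - U n = (τ / 2) • (V (n + 1) + V n) ∧
        V (n + 1) - V n = -((τ / 2) • A (U (n + 1) + U n)) - (τ * lam / 2) • (U (n + 1) + U n)
          - ((τ / 2) * (R (n + 1) + R n)) • b n ∧
        R (n + 1) - R n = (1 / 2) * ⟪b n, U (n + 1) - U n⟫) →
      ∀ n : ℕ,
        (1 / 2) * (‖V n‖ ^ 2 + ⟪A (U n), U n⟫ + lam * ‖U n‖ ^ 2) + R n ^ 2 =
        (1 / 2) * (‖V 0‖ ^ 2 + ⟪A (U 0), U 0⟫ + lam * ‖U 0‖ ^ 2) + R 0 ^ 2) := by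
  have step : ∀ n : ℕ,
      U (n + 1) - U n = (τ / 2) • (V (n + 1) + V n) →
      V (n + 1) - V n = -((τ / 2) • A (U (n + 1) + U n)) - (τ * lam / 2) • (U (n + 1) + U n)
        - ((τ / 2) * (R (n + 1) + R n)) • b n →
      R (n + 1) - R n = (1 / 2) * ⟪b n, U (n + 1) - U n⟫ →
      (1 / 2) * (‖V (n + 1)‖ ^ 2 + ⟪A (U (n + 1)), U (n + 1)⟫ + lam * ‖U (n + 1)‖ ^ 2)
          + R (n + 1) ^ 2 =
        (1 / 2) * (‖V n‖ ^ 2 + ⟪A (U n), U n⟫ + lam * ‖U n‖ ^ 2) + R n ^ 2 := by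
    intro n h1 h2 h3
    -- pairing with V(n+1)+V n telescopes the kinetic energy
    have key1 : ⟪V (n + 1) - V n, V (n + 1) + V n⟫ = ‖V (n + 1)‖ ^ 2 - ‖V n‖ ^ 2 := by
      simp only [inner_sub_left, inner_add_right, real_inner_self_eq_norm_sq,
        real_inner_comm (V (n + 1)) (V n)]
      ring
    have hsub : ∀ x : H, (τ / 2) * ⟪x, V (n + 1) + V n⟫ = ⟪x, U (n + 1) - U n⟫ := by
      intro x; rw [h1, real_inner_smul_right]
    have keyA : ⟪U (n + 1) - U n, A (U (n + 1) + U n)⟫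
        = ⟪A (U (n + 1)), U (n + 1)⟫ - ⟪A (U n), U n⟫ := by
      have hc : ⟪U (n + 1), A (U n)⟫ = ⟪U n, A (U (n + 1))⟫ := by
        rw [← hA, real_inner_comm]
      simp only [map_add, inner_sub_left, inner_add_right]
      rw [real_inner_comm (A (U (n + 1))) (U (n + 1)), real_inner_comm (A (U n)) (U n)]
      rw [hc]
      ring
    have keyU : ⟪U (n + 1) - U n, U (n + 1) + U n⟫ = ‖U (n + 1)‖ ^ 2 - ‖U n‖ ^ 2 := by
      simp only [inner_sub_left, inner_add_right, real_inner_self_eq_norm_sq,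
        real_inner_comm (U (n + 1)) (U n)]
      ring
    have keyb : ⟪U (n + 1) - U n, b n⟫ = 2 * (R (n + 1) - R n) := by
      rw [real_inner_comm]
      rw [h3]; ring
    -- main identity
    have main : (τ / 2) * (‖V (n + 1)‖ ^ 2 - ‖V n‖ ^ 2)
        = -((τ / 2) * (⟪A (U (n + 1)), U (n + 1)⟫ - ⟪A (U n), U n⟫))
          - (τ * lam / 2) * (‖U (n + 1)‖ ^ 2 - ‖U n‖ ^ 2)
          - (τ / 2) * (R (n + 1) + R n) * (2 * (R (n + 1) - R n)) := by
      have e1 : (τ / 2) * (‖V (n + 1)‖ ^ 2 - ‖V n‖ ^ 2)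
          = ⟪V (n + 1) - V n, U (n + 1) - U n⟫ := by
        rw [← key1, ← hsub]
      have keyA' : ⟪A (U (n + 1) + U n), U (n + 1) - U n⟫
          = ⟪A (U (n + 1)), U (n + 1)⟫ - ⟪A (U n), U n⟫ := by
        rw [real_inner_comm]; exact keyA
      have keyU' : ⟪U (n + 1) + U n, U (n + 1) - U n⟫ = ‖U (n + 1)‖ ^ 2 - ‖U n‖ ^ 2 := by
        rw [real_inner_comm]; exact keyU
      have keyb' : ⟪b n, U (n + 1) - U n⟫ = 2 * (R (n + 1) - R n) := by
        rw [real_inner_comm]; exact keyb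
      rw [e1, h2]
      simp only [inner_sub_left, inner_neg_left, real_inner_smul_left]
      rw [keyA', keyU', keyb']
    have hτ' : τ ≠ 0 := ne_of_gt hτ
    have main2 : τ * ((1 / 2) * (‖V (n + 1)‖ ^ 2 + ⟪A (U (n + 1)), U (n + 1)⟫
          + lam * ‖U (n + 1)‖ ^ 2) + R (n + 1) ^ 2)
        = τ * ((1 / 2) * (‖V n‖ ^ 2 + ⟪A (U n), U n⟫ + lam * ‖U n‖ ^ 2) + R n ^ 2) := by
      nlinarith [main]
    exact mul_left_cancel₀ hτ' main2
  refine ⟨step, ?_⟩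
  intro hall n
  induction n with
  | zero => rfl
  | succ k ih =>
    obtain ⟨h1, h2, h3⟩ := hall k
    rw [step k h1 h2 h3]
    exact ih
end

section
/- Let E be a real normed vector space, let τ > 0, t ∈ ℝ, M ≥ 0, and let g : ℝ → E be twice differentiable with ‖g''(s)‖ ≤ M for all s ∈ [t − τ, t + τ/2]. Then ‖(3·g(t) − g(t − τ))/2 − g(t + τ/2)‖ ≤ (3M/4)·τ². -/
private lemma taylor_aux
    {E : Type*} [NormedAddCommGroup E] [NormedSpace ℝ E]
    (g g' g'' : ℝ → E)
    (hg : ∀ s : ℝ, HasDerivAt g (g' s) s)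
    (hg' : ∀ s : ℝ, HasDerivAt g' (g'' s) s)
    (a b M : ℝ)
    (hbound : ∀ s ∈ Set.uIcc a b, ‖g'' s‖ ≤ M) :
    ‖g b - g a - (b - a) • g' a‖ ≤ M * |b - a| ^ 2 := by
  set s := Set.uIcc a b with hs
  have hconv : Convex ℝ s := convex_uIcc a b
  have has : a ∈ s := Set.left_mem_uIcc
  have hbs : b ∈ s := Set.right_mem_uIcc
  -- step 1: ‖g' x - g' a‖ ≤ M * |b - a| on s
  have step1 : ∀ x ∈ s, ‖g' x - g' a‖ ≤ M * |b - a| := by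
    intro x hx
    rw [hs] at hx
    have h1 : ‖g' x - g' a‖ ≤ M * ‖x - a‖ :=
      hconv.norm_image_sub_le_of_norm_hasDerivWithin_le
        (fun y hy => (hg' y).hasDerivWithinAt) hbound has hx
    have hxa : ‖x - a‖ ≤ |b - a| := by
      rw [Real.norm_eq_abs]
      rcases le_total a b with hab | hab
      · rw [Set.uIcc_of_le hab] at hx
        rw [abs_of_nonneg (by linarith [hx.1] : (0:ℝ) ≤ x - a),
          abs_of_nonneg (by linarith : (0:ℝ) ≤ b - a)]
        linarith [hx.2]
      · rw [Set.uIcc_of_ge hab] at hx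
        rw [abs_of_nonpos (by linarith [hx.2] : x - a ≤ 0),
          abs_of_nonpos (by linarith : b - a ≤ 0)]
        linarith [hx.1]
    have hM0 : 0 ≤ M := le_trans (norm_nonneg _) (hbound a has)
    calc ‖g' x - g' a‖ ≤ M * ‖x - a‖ := h1
      _ ≤ M * |b - a| := by nlinarith
  -- step 2: apply MVT to f x := g x - (x - a) • g' a
  have step2 : ‖(g b - (b - a) • g' a) - (g a - (a - a) • g' a)‖
      ≤ M * |b - a| * ‖b - a‖ := by
    apply hconv.norm_image_sub_le_of_norm_hasDerivWithin_le
      (f := fun x => g x - (x - a) • g' a) (f' := fun x => g' x - g' a)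
      (fun x hx => ?_) step1 has hbs
    have h2 : HasDerivAt (fun y : ℝ => (y - a) • g' a) ((1:ℝ) • g' a) x :=
      ((hasDerivAt_id x).sub_const a).smul_const (g' a)
    have h3 : HasDerivAt (fun y => g y - (y - a) • g' a) (g' x - g' a) x := by
      exact ((hg x).sub h2).congr_deriv (by simp)
    exact h3.hasDerivWithinAt
  simp only [sub_self, zero_smul, sub_zero] at step2
  calc ‖g b - g a - (b - a) • g' a‖ = ‖(g b - (b - a) • g' a) - g a‖ := by congr 1; abel
    _ ≤ M * |b - a| * ‖b - a‖ := step2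
    _ = M * |b - a| ^ 2 := by rw [Real.norm_eq_abs]; ring

/-- Second-order truncation error estimate for the linear extrapolation
`(3 g(t) − g(t − τ))/2` used in the linearly implicit SAV scheme: it approximates
the value at the future midpoint `t + τ/2` to order `τ²`. -/
theorem extrapolation_error
    {E : Type*} [NormedAddCommGroup E] [NormedSpace ℝ E]
    (τ t M : ℝ) (hτ : 0 < τ) (hM : 0 ≤ M)
    (g g' g'' : ℝ → E)
    (hg : ∀ s : ℝ, HasDerivAt g (g' s) s)
    (hg' : ∀ s : ℝ, HasDerivAt g' (g'' s) s)
    (hbound : ∀ s ∈ Set.Icc (t - τ) (t + τ / 2), ‖g'' s‖ ≤ M) :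
    ‖(2 : ℝ)⁻¹ • ((3 : ℝ) • g t - g (t - τ)) - g (t + τ / 2)‖ ≤ 3 * M / 4 * τ ^ 2 := by
  have hA : ‖g (t + τ / 2) - g t - ((t + τ / 2) - t) • g' t‖ ≤ M * |(t + τ / 2) - t| ^ 2 := by
    apply taylor_aux g g' g'' hg hg'
    intro s hs
    apply hbound
    rw [Set.uIcc_of_le (by linarith)] at hs
    exact ⟨by linarith [hs.1], hs.2⟩
  have hB : ‖g (t - τ) - g t - ((t - τ) - t) • g' t‖ ≤ M * |(t - τ) - t| ^ 2 := by
    apply taylor_aux g g' g'' hg hg'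
    intro s hs
    apply hbound
    rw [Set.uIcc_of_ge (by linarith)] at hs
    exact ⟨hs.1, by linarith [hs.2]⟩
  have habs1 : |(t + τ / 2) - t| = τ / 2 := by rw [abs_of_nonneg] <;> linarith
  have habs2 : |(t - τ) - t| = τ := by rw [abs_of_nonpos] <;> [skip; linarith]; ring_nf
  rw [habs1] at hA
  rw [habs2] at hB
  have key : (2 : ℝ)⁻¹ • ((3 : ℝ) • g t - g (t - τ)) - g (t + τ / 2)
      = -(g (t + τ / 2) - g t - ((t + τ / 2) - t) • g' t)
        - (2 : ℝ)⁻¹ • (g (t - τ) - g t - ((t - τ) - t) • g' t) := by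
    have h1 : ((t + τ / 2) - t : ℝ) = τ / 2 := by ring
    have h2 : ((t - τ) - t : ℝ) = -τ := by ring
    rw [h1, h2]
    module
  rw [key]
  calc ‖-(g (t + τ / 2) - g t - ((t + τ / 2) - t) • g' t)
        - (2 : ℝ)⁻¹ • (g (t - τ) - g t - ((t - τ) - t) • g' t)‖
      ≤ ‖g (t + τ / 2) - g t - ((t + τ / 2) - t) • g' t‖
        + (2 : ℝ)⁻¹ * ‖g (t - τ) - g t - ((t - τ) - t) • g' t‖ := by
        refine le_trans (norm_sub_le _ _) ?_
        rw [norm_neg, norm_smul]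
        simp [Real.norm_eq_abs, abs_of_nonneg]
    _ ≤ M * (τ / 2) ^ 2 + (2 : ℝ)⁻¹ * (M * τ ^ 2) := by
        have : (0:ℝ) ≤ (2:ℝ)⁻¹ := by norm_num
        gcongr
    _ = 3 * M / 4 * τ ^ 2 := by ring
end

section
/- Fix n ≥ 0 and suppose the perturbed error equations hold at step n: E_u^{n+1} − E_u^n = (τ/2)·(E_v^{n+1} + E_v^n) + τ·T₁; E_v^{n+1} − E_v^n = −(τ/2)·A(E_u^{n+1} + E_u^n) − (τλ/2)·(E_u^{n+1} + E_u^n) − (τ/2)·(e_r^{n+1} + e_r^n)·b + τ·(T₂ + I₂); and e_r^{n+1} − e_r^n = (1/2)·⟨b, E_u^{n+1} − E_u^n⟩ + T₃ + I₃. Then the following error-energy identity holds: (1/2)·(‖E_v^{n+1}‖² − ‖E_v^{n}‖²) + (1/2)·(⟨A E_u^{n+1}, E_u^{n+1}⟩ − ⟨A E_u^{n}, E_u^{n}⟩) + (λ/2)·(‖E_u^{n+1}‖² − ‖E_u^{n}‖²) + (e_r^{n+1})² − (e_r^{n})² = ⟨I₂ + T₂, E_u^{n+1} − E_u^n⟩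 − ⟨T₁, E_v^{n+1} − E_v^n⟩ + (T₃ + I₃)·(e_r^{n+1} + e_r^n). -/
open scoped RealInnerProductSpace

/-- The fundamental error-energy identity underlying the convergence proof of the
temporal SAV discretization of the nonlinear wave equation. -/
theorem sav_error_energy_identity
    {H : Type*} [NormedAddCommGroup H] [InnerProductSpace ℝ H] [CompleteSpace H]
    (A : H →L[ℝ] H) (hA : ∀ x y : H, ⟪A x, y⟫ = ⟪x, A y⟫)
    (lam : ℝ) (hlam : 0 ≤ lam) (τ : ℝ) (hτ : 0 < τ)
    (n : ℕ) (Eu Ev : ℕ → H) (er : ℕ → ℝ)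
    (b T₁ T₂ I₂ : H) (T₃ I₃ : ℝ)
    (h1 : Eu (n + 1) - Eu n = (τ / 2) • (Ev (n + 1) + Ev n) + τ • T₁)
    (h2 : Ev (n + 1) - Ev n = -((τ / 2) • A (Eu (n + 1) + Eu n))
      - (τ * lam / 2) • (Eu (n + 1) + Eu n)
      - ((τ / 2) * (er (n + 1) + er n)) • b + τ • (T₂ + I₂))
    (h3 : er (n + 1) - er n = (1 / 2) * ⟪b, Eu (n + 1) - Eu n⟫ + T₃ + I₃) :
    (1 / 2) * (‖Ev (n + 1)‖ ^ 2 - ‖Ev n‖ ^ 2)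
        + (1 / 2) * (⟪A (Eu (n + 1)), Eu (n + 1)⟫ - ⟪A (Eu n), Eu n⟫)
        + (lam / 2) * (‖Eu (n + 1)‖ ^ 2 - ‖Eu n‖ ^ 2)
        + (er (n + 1) ^ 2 - er n ^ 2) =
      ⟪I₂ + T₂, Eu (n + 1) - Eu n⟫ - ⟪T₁, Ev (n + 1) - Ev n⟫
        + (T₃ + I₃) * (er (n + 1) + er n) := by
  have e1 : ⟪Ev (n + 1) - Ev n, Eu (n + 1) - Eu n⟫ =
      ⟪(-((τ / 2) • A (Eu (n + 1) + Eu n))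
        - (τ * lam / 2) • (Eu (n + 1) + Eu n)
        - ((τ / 2) * (er (n + 1) + er n)) • b + τ • (T₂ + I₂) : H), Eu (n + 1) - Eu n⟫ := by
    rw [← h2]
  have e2 : ⟪Ev (n + 1) - Ev n, Eu (n + 1) - Eu n⟫ =
      ⟪Ev (n + 1) - Ev n, ((τ / 2) • (Ev (n + 1) + Ev n) + τ • T₁ : H)⟫ := by
    rw [← h1]
  have e3 : ⟪b, Eu (n + 1) - Eu n⟫ =
      ⟪b, ((τ / 2) • (Ev (n + 1) + Ev n) + τ • T₁ : H)⟫ := by rw [← h1]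
  have hc : ⟪A (Eu n), Eu (n + 1)⟫ = ⟪A (Eu (n + 1)), Eu n⟫ := by
    rw [hA, real_inner_comm]
  simp only [map_add, inner_add_left, inner_add_right, inner_sub_left, inner_sub_right,
    inner_neg_left, real_inner_smul_left, real_inner_smul_right,
    ← real_inner_self_eq_norm_sq] at e1 e2 e3 h3 ⊢
  have hτ' : τ ≠ 0 := ne_of_gt hτ
  rw [real_inner_comm T₁ (Ev (n+1)), real_inner_comm T₁ (Ev n),
      real_inner_comm (Ev (n+1)) (Ev n)] at e2
  rw [real_inner_comm (Eu (n+1)) (Eu n), hc] at e1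
  have e4 : (1 / 2) * (⟪Ev (n + 1), Ev (n + 1)⟫ - ⟪Ev n, Ev n⟫)
      + (1 / 2) * (⟪A (Eu (n + 1)), Eu (n + 1)⟫ - ⟪A (Eu n), Eu n⟫)
      + (lam / 2) * (⟪Eu (n + 1), Eu (n + 1)⟫ - ⟪Eu n, Eu n⟫)
      + (1 / 2) * (er (n + 1) + er n) * (⟪b, Eu (n + 1)⟫ - ⟪b, Eu n⟫) =
      ⟪T₂, Eu (n + 1)⟫ + ⟪I₂, Eu (n + 1)⟫ - ⟪T₂, Eu n⟫ - ⟪I₂, Eu n⟫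
        - ⟪T₁, Ev (n + 1)⟫ + ⟪T₁, Ev n⟫ :=
    mul_left_cancel₀ hτ' (by linear_combination e1 - e2)
  linear_combination e4 + (er (n + 1) + er n) * h3
end
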